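/- Let H be a central hyperplane arrangement in an n-dimensional inner product space, given by a set E of unit vectors with E ∩ (−E) = ∅, and let e ∈ E. Let U₁, U₂ be chambers of the restricted arrangement H''_e on the hyperplane H_e, and let Z₁, Z₂ be the unique chambers of the even restricted arrangement H_e containing U₁ and U₂ respectively. Then |S_H(U₁ ∘ e, U₂ ∘ e)| ≡ |S_{H_e}(Z₁, Z₂)| (mod 2), where U ∘ e denotes the chamber of H obtained by composing the face U with the direction e. -/

import Mathlib

open scoped RealInnerProductSpace

noncomputable section
attribute [local instance] Classical.propDecidable

/-- The hyperplane orthogonal to `e`. -/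
def hyp {n : ℕ} (e : EuclideanSpace ℝ (Fin n)) : Submodule ℝ (EuclideanSpace ℝ (Fin n)) :=
  (ℝ ∙ e)ᗮ

/-- The intersection multiplicity of the codimension-2 subspace `H_e ∩ H_f`:
the number of `g ∈ E` whose hyperplane contains it. -/
def imult {n : ℕ} (E : Finset (EuclideanSpace ℝ (Fin n))) (e f : EuclideanSpace ℝ (Fin n)) : ℕ :=
  {g | g ∈ E ∧ hyp e ⊓ hyp f ≤ hyp g}.ncard

/-- The region (chamber, if nonempty) of the restricted arrangement `H''_e` on the hyperplane
`H_e` given by a sign vector `σ` on `E \ {e}`. -/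
def resRegion {n : ℕ} (E : Finset (EuclideanSpace ℝ (Fin n))) (e : EuclideanSpace ℝ (Fin n))
    (σ : EuclideanSpace ℝ (Fin n) → Bool) : Set (EuclideanSpace ℝ (Fin n)) :=
  {x | ⟪e, x⟫ = 0 ∧ ∀ f ∈ E, f ≠ e → (if σ f then 0 < ⟪f, x⟫ else ⟪f, x⟫ < 0)}

/-! Fix `x₁ ∈ U₁` and `x₂ ∈ U₂` on `H_e`. If `H_e ∩ H_f ⊆ H_g`, then `g = a e + b f` with
`b ≠ 0`, so `⟪g, x⟫ = b ⟪f, x⟫` on `H_e`: the hyperplanes of `E \ {e}` through a common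
codimension-2 subspace `W = H_e ∩ H_f` all separate `x₁` from `x₂`, or none does. Their number is
`im(W) - 1`: besides them only `e` contains `W`, as `-e ∉ E`. Counting the
separating hyperplanes class by class, the classes of odd size are exactly the even-multiplicity
subspaces. -/

open Finset in
theorem Finset.card_modEq_card_image_filter_odd_fiber {α β : Type*} [DecidableEq β]
    (s : Finset α) (φ : α → β) :
    #s ≡ #((s.filter fun a => Odd #{b ∈ s | φ b = φ a}).image φ) [MOD 2] := by
  have hodd : (s.filter fun a => Odd #{b ∈ s | φ b = φ a}).image φ
      = (s.image φ).filter fun c => Odd #{b ∈ s | φ b = c} := by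
    ext c
    simp only [Finset.mem_image, Finset.mem_filter]
    constructor
    · rintro ⟨a, ⟨ha, hodd⟩, rfl⟩
      exact ⟨⟨a, ha, rfl⟩, hodd⟩
    · rintro ⟨⟨a, ha, rfl⟩, hodd⟩
      exact ⟨a, ⟨ha, hodd⟩, rfl⟩
  have hparity := Finset.even_sum_iff_even_card_odd (s := s.image φ) fun c => #{b ∈ s | φ b = c}
  rw [← Finset.card_eq_sum_card_image, Nat.even_iff, Nat.even_iff] at hparity
  rw [hodd, Nat.ModEq]
  omega

theorem Set.ncard_modEq_ncard_image_odd_fiber {α β : Type*} {s : Set α} (hs : s.Finite)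
    (φ : α → β) : s.ncard ≡ (φ '' {a ∈ s | Odd {b ∈ s | φ b = φ a}.ncard}).ncard [MOD 2] := by
  lift s to Finset α using hs
  have hfilter (p : α → Prop) : {a | a ∈ (s : Set α) ∧ p a} = ↑(s.filter p) := by
    ext; simp
  simp_rw [hfilter, Set.ncard_coe_finset, ← Finset.coe_image, Set.ncard_coe_finset]
  exact s.card_modEq_card_image_filter_odd_fiber φ

theorem notMem_span_singleton_of_norm_eq_one {V : Type*} [NormedAddCommGroup V]
    [NormedSpace ℝ V] {e g : V} (he : ‖e‖ = 1) (hg : ‖g‖ = 1) (hge : g ≠ e) (hge' : g ≠ -e) :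
    g ∉ ℝ ∙ e := by
  rintro hmem
  obtain ⟨a, rfl⟩ := Submodule.mem_span_singleton.mp hmem
  rw [norm_smul, he, mul_one, Real.norm_eq_abs] at hg
  rcases abs_eq zero_le_one |>.mp hg with rfl | rfl
  · exact hge (one_smul ℝ e)
  · exact hge' (neg_one_smul ℝ e)

theorem ne_iff_mul_neg_of_signs {b₁ b₂ : Bool} {r₁ r₂ : ℝ} (h₁ : if b₁ then 0 < r₁ else r₁ < 0)
    (h₂ : if b₂ then 0 < r₂ else r₂ < 0) : b₁ ≠ b₂ ↔ r₁ * r₂ < 0 := by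
  cases b₁ <;> cases b₂ <;> simp only [Bool.false_eq_true, ↓reduceIte] at h₁ h₂ <;> simp <;>
    nlinarith

section Hyperplanes

variable {n : ℕ} {e f g x : EuclideanSpace ℝ (Fin n)}

theorem mem_hyp : x ∈ hyp e ↔ ⟪e, x⟫ = 0 :=
  Submodule.mem_orthogonal_singleton_iff_inner_right

theorem mem_span_pair_of_inf_hyp_le (h : hyp e ⊓ hyp f ≤ hyp g) :
    g ∈ Submodule.span ℝ {e, f} := by
  have hperp : (ℝ ∙ e ⊔ ℝ ∙ f)ᗮ ≤ (ℝ ∙ g)ᗮ := by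
    rwa [← Submodule.inf_orthogonal]
  have hspan := Submodule.orthogonal_le hperp
  rw [Submodule.orthogonal_orthogonal, Submodule.orthogonal_orthogonal] at hspan
  rw [Submodule.span_insert]
  exact hspan (Submodule.mem_span_singleton_self g)

theorem exists_inner_eq_mul_inner_of_inf_hyp_le (h : hyp e ⊓ hyp f ≤ hyp g) :
    ∃ b : ℝ, ∀ x ∈ hyp e, ⟪g, x⟫ = b * ⟪f, x⟫ := by
  obtain ⟨a, b, hab⟩ := Submodule.mem_span_pair.mp (mem_span_pair_of_inf_hyp_le h)
  refine ⟨b, fun x hx => ?_⟩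
  rw [← hab, inner_add_left, real_inner_smul_left, real_inner_smul_left, mem_hyp.mp hx]
  ring

theorem inf_hyp_eq_of_inf_hyp_le (hg : g ∉ ℝ ∙ e) (h : hyp e ⊓ hyp f ≤ hyp g) :
    hyp e ⊓ hyp g = hyp e ⊓ hyp f := by
  obtain ⟨b, hb⟩ := exists_inner_eq_mul_inner_of_inf_hyp_le h
  have hb0 : b ≠ 0 := by
    rintro rfl
    refine hg ?_
    rw [← Submodule.orthogonal_orthogonal (ℝ ∙ e), Submodule.mem_orthogonal]
    intro x hx
    rw [real_inner_comm, hb x hx, zero_mul]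
  refine le_antisymm (fun x hx => ⟨hx.1, ?_⟩) (le_inf inf_le_left h)
  have hgx := hb x hx.1
  rw [mem_hyp.mp hx.2, eq_comm, mul_eq_zero] at hgx
  exact mem_hyp.mpr (hgx.resolve_left hb0)

end Hyperplanes

section Regions

variable {n : ℕ} {E : Finset (EuclideanSpace ℝ (Fin n))} {e f g x₁ x₂ : EuclideanSpace ℝ (Fin n)}
  {σ₁ σ₂ : EuclideanSpace ℝ (Fin n) → Bool}

theorem ne_iff_ne_of_inf_hyp_le (hx₁ : x₁ ∈ resRegion E e σ₁) (hx₂ : x₂ ∈ resRegion E e σ₂)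
    (hf : f ∈ E) (hfe : f ≠ e) (hg : g ∈ E) (hge : g ≠ e) (h : hyp e ⊓ hyp f ≤ hyp g) :
    σ₁ f ≠ σ₂ f ↔ σ₁ g ≠ σ₂ g := by
  obtain ⟨b, hb⟩ := exists_inner_eq_mul_inner_of_inf_hyp_le h
  have hb0 : b ≠ 0 := by
    rintro rfl
    have hg₁ := hx₁.2 g hg hge
    rw [hb x₁ (mem_hyp.mpr hx₁.1), zero_mul] at hg₁
    split at hg₁ <;> exact lt_irrefl 0 hg₁
  have hprod : ⟪g, x₁⟫ * ⟪g, x₂⟫ = b ^ 2 * (⟪f, x₁⟫ * ⟪f, x₂⟫) := by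
    rw [hb x₁ (mem_hyp.mpr hx₁.1), hb x₂ (mem_hyp.mpr hx₂.1)]
    ring
  rw [ne_iff_mul_neg_of_signs (hx₁.2 f hf hfe) (hx₂.2 f hf hfe),
    ne_iff_mul_neg_of_signs (hx₁.2 g hg hge) (hx₂.2 g hg hge), hprod]
  have hb2 : 0 < b ^ 2 := by positivity
  constructor <;> intro hneg <;> nlinarith

theorem imult_eq_ncard_add_one (hunit : ∀ g ∈ E, ‖g‖ = 1) (hopp : -e ∉ E) (he : e ∈ E)
    (f : EuclideanSpace ℝ (Fin n)) :
    imult E e f = {g | g ∈ E ∧ g ≠ e ∧ hyp e ⊓ hyp g = hyp e ⊓ hyp f}.ncard + 1 := by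
  have hinsert : {g | g ∈ E ∧ hyp e ⊓ hyp f ≤ hyp g}
      = insert e {g | g ∈ E ∧ g ≠ e ∧ hyp e ⊓ hyp g = hyp e ⊓ hyp f} := by
    ext g
    by_cases hge : g = e
    · subst hge
      exact iff_of_true ⟨he, inf_le_left⟩ (Set.mem_insert _ _)
    simp only [Set.mem_ofPred_eq, Set.mem_insert_iff, hge, false_or, ne_eq, not_false_eq_true,
      true_and]
    refine and_congr_right fun hg => ⟨fun h => ?_, fun h => h ▸ inf_le_right⟩
    refine inf_hyp_eq_of_inf_hyp_le ?_ h
    exact notMem_span_singleton_of_norm_eq_one (hunit e he) (hunit g hg) hge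
      (by rintro rfl; exact hopp hg)
  rw [imult, hinsert, Set.ncard_insert_of_notMem (fun h => h.2.1 rfl)
    (E.finite_toSet.subset fun g hg => hg.1)]

end Regions

/-- `U₁, U₂` are encoded by sign vectors `σ₁, σ₂` on `E \ {e}` with nonempty regions. The
chamber `Uᵢ ∘ e` has the same signs on `E \ {e}`, so `S_H(U₁ ∘ e, U₂ ∘ e)` is the set of
`f ∈ E \ {e}` with `σ₁ f ≠ σ₂ f`, and `S_{H_e}(Z₁, Z₂)` is the set of even-multiplicity
subspaces `H_e ∩ H_f` for such `f`. -/
theorem parity_separation {n : ℕ} (E : Finset (EuclideanSpace ℝ (Fin n)))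
    (hunit : ∀ e ∈ E, ‖e‖ = 1) (hopp : ∀ e ∈ E, -e ∉ E)
    (e : EuclideanSpace ℝ (Fin n)) (he : e ∈ E)
    (σ₁ σ₂ : EuclideanSpace ℝ (Fin n) → Bool)
    (h₁ : (resRegion E e σ₁).Nonempty) (h₂ : (resRegion E e σ₂).Nonempty) :
    {f | f ∈ E ∧ f ≠ e ∧ σ₁ f ≠ σ₂ f}.ncard ≡
      ((fun f => hyp e ⊓ hyp f) ''
        {f | f ∈ E ∧ f ≠ e ∧ Even (imult E e f) ∧ σ₁ f ≠ σ₂ f}).ncard [MOD 2] := by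
  obtain ⟨x₁, hx₁⟩ := h₁
  obtain ⟨x₂, hx₂⟩ := h₂
  set A := {f | f ∈ E ∧ f ≠ e ∧ σ₁ f ≠ σ₂ f}
  have hclass : ∀ f ∈ A, {g ∈ A | hyp e ⊓ hyp g = hyp e ⊓ hyp f}
      = {g | g ∈ E ∧ g ≠ e ∧ hyp e ⊓ hyp g = hyp e ⊓ hyp f} := by
    rintro f ⟨hf, hfe, hσf⟩
    ext g
    refine ⟨fun ⟨⟨hg, hge, _⟩, hW⟩ => ⟨hg, hge, hW⟩, fun ⟨hg, hge, hW⟩ => ⟨⟨hg, hge, ?_⟩, hW⟩⟩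
    exact (ne_iff_ne_of_inf_hyp_le hx₁ hx₂ hf hfe hg hge (hW.symm.le.trans inf_le_right)).mp hσf
  have heven : {f | f ∈ E ∧ f ≠ e ∧ Even (imult E e f) ∧ σ₁ f ≠ σ₂ f}
      = {f ∈ A | Odd {g ∈ A | hyp e ⊓ hyp g = hyp e ⊓ hyp f}.ncard} := by
    ext f
    simp only [Set.mem_ofPred_eq, imult_eq_ncard_add_one hunit (hopp e he) he f,
      Nat.even_add_one, Nat.not_even_iff_odd]
    constructor
    · rintro ⟨hf, hfe, hodd, hσf⟩
      exact ⟨⟨hf, hfe, hσf⟩, hclass f ⟨hf, hfe, hσf⟩ ▸ hodd⟩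
    · rintro ⟨hfA, hodd⟩
      exact ⟨hfA.1, hfA.2.1, hclass f hfA ▸ hodd, hfA.2.2⟩
  rw [heven]
  exact Set.ncard_modEq_ncard_image_odd_fiber (E.finite_toSet.subset fun f hf => hf.1) _
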